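/- Let H₀, H₁, H₂ be complex Hilbert spaces, and let S : H₀ → H₁ and T : H₁ → H₂ be densely defined closed operators such that Range(S) ⊆ Ker(T), and assume Range(S) and Range(T) are closed. Then H₁ decomposes as the orthogonal direct sum H₁ = (Ker T ∩ Ker S*) ⊕ Range(S) ⊕ Range(T*). -/

import Mathlib

open scoped InnerProductSpace

/-- The range of a partially defined linear operator, as a submodule of the codomain. -/
noncomputable def pRange {𝕜 E F : Type*} [RCLike 𝕜]
    [NormedAddCommGroup E] [InnerProductSpace 𝕜 E]
    [NormedAddCommGroup F] [InnerProductSpace 𝕜 F]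
    (T : E →ₗ.[𝕜] F) : Submodule 𝕜 F :=
  LinearMap.range T.toFun

/-- The kernel of a partially defined linear operator, as a submodule of the domain space. -/
noncomputable def pKer {𝕜 E F : Type*} [RCLike 𝕜]
    [NormedAddCommGroup E] [InnerProductSpace 𝕜 E]
    [NormedAddCommGroup F] [InnerProductSpace 𝕜 F]
    (T : E →ₗ.[𝕜] F) : Submodule 𝕜 E :=
  (LinearMap.ker T.toFun).map T.domain.subtype

/-!
Since `Range S ⊆ Ker T` with `Range S` closed and `Ker T` closed, `H₁ = Ker T ⊕ (Ker T)ᗮ` and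
`Ker T = Range S ⊕ (Ker T ∩ (Range S)ᗮ)`. For densely defined `S` one has `(Range S)ᗮ = Ker S*`,
and for closed `T` with closed range the closed range theorem gives `(Ker T)ᗮ = Range T*`.
-/

section PartialOperator

variable {𝕜 E F : Type*} [RCLike 𝕜]
  [NormedAddCommGroup E] [InnerProductSpace 𝕜 E]
  [NormedAddCommGroup F] [InnerProductSpace 𝕜 F]
  {T : E →ₗ.[𝕜] F}

theorem mem_pKer_iff {x : E} : x ∈ pKer T ↔ ∃ hx : x ∈ T.domain, T ⟨x, hx⟩ = 0 :=
  ⟨fun ⟨y, hy, hyx⟩ => hyx ▸ ⟨y.2, hy⟩, fun ⟨hx, h⟩ => ⟨⟨x, hx⟩, h, rfl⟩⟩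

theorem isClosed_pKer (hTc : T.IsClosed) : IsClosed (pKer T : Set E) := by
  have : (pKer T : Set E) = (fun x => (x, (0 : F))) ⁻¹' (T.graph : Set (E × F)) := by
    ext x
    simp only [SetLike.mem_coe, Set.mem_preimage, LinearPMap.mem_graph_iff, mem_pKer_iff]
    exact ⟨fun ⟨hx, h⟩ => ⟨⟨x, hx⟩, rfl, h⟩, fun ⟨y, hyx, hy⟩ => hyx ▸ ⟨y.2, hy⟩⟩
  rw [this]
  exact hTc.preimage (Continuous.prodMk_left 0)

/-- The open mapping theorem for `(x, T x) ↦ T x` from the graph onto the range. -/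
theorem exists_preimage_norm_le_of_isClosed_pRange [CompleteSpace E] [CompleteSpace F]
    (hTc : T.IsClosed) (hTr : IsClosed (pRange T : Set F)) :
    ∃ C, ∀ y ∈ pRange T, ∃ x : T.domain, T x = y ∧ ‖(x : E)‖ ≤ C * ‖y‖ := by
  have : CompleteSpace T.graph := hTc.completeSpace_coe
  have : CompleteSpace (pRange T) := hTr.completeSpace_coe
  let π : T.graph →L[𝕜] pRange T :=
    ((ContinuousLinearMap.snd 𝕜 E F).comp T.graph.subtypeL).codRestrict (pRange T) fun z => by
      obtain ⟨x, -, hx⟩ := T.mem_graph_iff.mp z.2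
      exact ⟨x, hx⟩
  have hπ : Function.Surjective π := by
    rintro ⟨-, x, rfl⟩
    exact ⟨⟨((x : E), T x), T.mem_graph x⟩, rfl⟩
  obtain ⟨C, -, hC⟩ := π.exists_preimage_norm_le hπ
  refine ⟨C, fun y hy => ?_⟩
  obtain ⟨z, hzy, hz⟩ := hC ⟨y, hy⟩
  obtain ⟨x, hxz, hTx⟩ := T.mem_graph_iff.mp z.2
  refine ⟨x, hTx.trans (congrArg Subtype.val hzy), ?_⟩
  calc ‖(x : E)‖ = ‖(z : E × F).1‖ := by rw [hxz]
    _ ≤ ‖z‖ := norm_fst_le (z : E × F)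
    _ ≤ C * ‖y‖ := hz

/-- `T x ↦ ⟪v, x⟫` is well defined on `Range T` since `v ⊥ Ker T` (we evaluate it through an
arbitrary linear section of `T`), bounded by `exists_preimage_norm_le_of_isClosed_pRange`, and represented by `w`
via Hahn–Banach and Riesz. -/
theorem exists_inner_apply_eq_of_mem_orthogonal [CompleteSpace E] [CompleteSpace F]
    (hTc : T.IsClosed) (hTr : IsClosed (pRange T : Set F))
    {v : E} (hv : v ∈ (pKer T)ᗮ) : ∃ w : F, ∀ x : T.domain, ⟪w, T x⟫_𝕜 = ⟪v, (x : E)⟫_𝕜 := by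
  obtain ⟨C, hC⟩ := exists_preimage_norm_le_of_isClosed_pRange hTc hTr
  obtain ⟨s, hs⟩ := T.toFun.rangeRestrict.exists_rightInverse_of_surjective
    T.toFun.range_rangeRestrict
  let ℓ : pRange T →ₗ[𝕜] 𝕜 := innerₛₗ 𝕜 v ∘ₗ T.domain.subtype ∘ₗ s
  have hℓ : ∀ x : T.domain, ℓ (T.toFun.rangeRestrict x) = ⟪v, (x : E)⟫_𝕜 := by
    intro x
    have hker : ((s (T.toFun.rangeRestrict x) - x : T.domain) : E) ∈ pKer T := by
      refine ⟨s (T.toFun.rangeRestrict x) - x, ?_, rfl⟩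
      rw [SetLike.mem_coe, LinearMap.mem_ker, map_sub, sub_eq_zero]
      exact congrArg Subtype.val (LinearMap.congr_fun hs (T.toFun.rangeRestrict x))
    have := Submodule.inner_right_of_mem_orthogonal hker hv
    simp only [Submodule.coe_sub, inner_sub_left, sub_eq_zero] at this
    change ⟪v, (s (T.toFun.rangeRestrict x) : E)⟫_𝕜 = _
    simpa using congrArg (starRingEnd 𝕜) this
  have hbound : ∀ y, ‖ℓ y‖ ≤ (C * ‖v‖) * ‖y‖ := by
    rintro ⟨y, hy⟩
    obtain ⟨x, rfl, hx⟩ := hC y hy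
    calc ‖ℓ (T.toFun.rangeRestrict x)‖ = ‖⟪v, (x : E)⟫_𝕜‖ := by rw [hℓ]
      _ ≤ ‖v‖ * ‖(x : E)‖ := norm_inner_le_norm _ _
      _ ≤ ‖v‖ * (C * ‖T x‖) := by gcongr
      _ = C * ‖v‖ * ‖(⟨T x, hy⟩ : pRange T)‖ := by rw [Submodule.coe_norm]; ring
  obtain ⟨g, hg, -⟩ := exists_extension_norm_eq (pRange T) (ℓ.mkContinuous _ hbound)
  refine ⟨(InnerProductSpace.toDual 𝕜 F).symm g, fun x => ?_⟩
  rw [InnerProductSpace.toDual_symm_apply]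
  exact (hg (T.toFun.rangeRestrict x)).trans (hℓ x)

theorem pKer_adjoint_eq_orthogonal_pRange [CompleteSpace E] (hT : Dense (T.domain : Set E)) :
    pKer T.adjoint = (pRange T)ᗮ := by
  apply le_antisymm
  · rintro a ha _ ⟨x, rfl⟩
    obtain ⟨ha', ha0⟩ := mem_pKer_iff.mp ha
    have := LinearPMap.adjoint_isFormalAdjoint hT ⟨a, ha'⟩ x
    rw [ha0, inner_zero_left] at this
    exact inner_eq_zero_symm.mp this.symm
  · intro v hv
    have hv' : ∀ x : T.domain, ⟪(0 : E), (x : E)⟫_𝕜 = ⟪v, T x⟫_𝕜 := fun x =>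
      (inner_zero_left _).trans
        (Submodule.inner_left_of_mem_orthogonal (LinearMap.mem_range_self _ x) hv).symm
    have hvd : v ∈ T.adjoint.domain := LinearPMap.mem_adjoint_domain_of_exists v ⟨0, hv'⟩
    exact mem_pKer_iff.mpr ⟨hvd, LinearPMap.adjoint_apply_eq hT ⟨v, hvd⟩ hv'⟩

/-- The closed range theorem for densely defined closed operators between Hilbert spaces. -/
theorem pRange_adjoint_eq_orthogonal_pKer [CompleteSpace E] [CompleteSpace F]
    (hT : Dense (T.domain : Set E)) (hTc : T.IsClosed) (hTr : IsClosed (pRange T : Set F)) :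
    pRange T.adjoint = (pKer T)ᗮ := by
  apply le_antisymm
  · rintro _ ⟨w, rfl⟩ a ha
    obtain ⟨ha', ha0⟩ := mem_pKer_iff.mp ha
    have := LinearPMap.adjoint_isFormalAdjoint hT w ⟨a, ha'⟩
    rw [ha0, inner_zero_right] at this
    exact inner_eq_zero_symm.mp this
  · intro v hv
    obtain ⟨w, hw⟩ := exists_inner_apply_eq_of_mem_orthogonal hTc hTr hv
    have hw' : ∀ x : T.domain, ⟪v, (x : E)⟫_𝕜 = ⟪w, T x⟫_𝕜 := fun x => (hw x).symm
    have hwd : w ∈ T.adjoint.domain := LinearPMap.mem_adjoint_domain_of_exists w ⟨v, hw'⟩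
    exact ⟨⟨w, hwd⟩, LinearPMap.adjoint_apply_eq hT ⟨w, hwd⟩ hw'⟩

end PartialOperator

section Orthogonal

variable {𝕜 E : Type*} [RCLike 𝕜] [NormedAddCommGroup E] [InnerProductSpace 𝕜 E]

theorem Submodule.IsOrtho.eq_zero_of_add_eq_zero {U V : Submodule 𝕜 E} (h : U ⟂ V) {u v : E}
    (hu : u ∈ U) (hv : v ∈ V) (huv : u + v = 0) : u = 0 :=
  Submodule.disjoint_def.mp h.disjoint u hu (eq_neg_of_add_eq_zero_left huv ▸ V.neg_mem hv)

theorem exists_unique_add_add_of_isOrtho {U V W : Submodule 𝕜 E} (hUV : U ⟂ V) (hUW : U ⟂ W)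
    (hVW : V ⟂ W) (htop : U ⊔ V ⊔ W = ⊤) (v : E) :
    ∃ a ∈ U, ∃ b ∈ V, ∃ c ∈ W, v = a + b + c ∧
      ∀ a' ∈ U, ∀ b' ∈ V, ∀ c' ∈ W, v = a' + b' + c' → a' = a ∧ b' = b ∧ c' = c := by
  obtain ⟨_, hab, c, hc, rfl⟩ := Submodule.mem_sup.mp (htop ▸ Submodule.mem_top : v ∈ U ⊔ V ⊔ W)
  obtain ⟨a, ha, b, hb, rfl⟩ := Submodule.mem_sup.mp hab
  refine ⟨a, ha, b, hb, c, hc, rfl, fun a' ha' b' hb' c' hc' h => ?_⟩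
  have hsum : (a' - a) + ((b' - b) + (c' - c)) = 0 :=
    calc _ = (a' + b' + c') - (a + b + c) := by abel
      _ = 0 := by rw [h, sub_self]
  have hA : a' - a = 0 := (Submodule.isOrtho_sup_right.mpr ⟨hUV, hUW⟩).eq_zero_of_add_eq_zero
    (U.sub_mem ha' ha) (Submodule.add_mem_sup (V.sub_mem hb' hb) (W.sub_mem hc' hc)) hsum
  rw [hA, zero_add] at hsum
  have hB : b' - b = 0 := hVW.eq_zero_of_add_eq_zero (V.sub_mem hb' hb) (W.sub_mem hc' hc) hsum
  rw [hB, zero_add] at hsum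
  exact ⟨sub_eq_zero.mp hA, sub_eq_zero.mp hB, sub_eq_zero.mp hsum⟩

end Orthogonal

theorem pKer_inf_pKer_adjoint_sup_pRange_sup_pRange_adjoint_eq_top
    {𝕜 H₀ H₁ H₂ : Type*} [RCLike 𝕜]
    [NormedAddCommGroup H₀] [InnerProductSpace 𝕜 H₀] [CompleteSpace H₀]
    [NormedAddCommGroup H₁] [InnerProductSpace 𝕜 H₁] [CompleteSpace H₁]
    [NormedAddCommGroup H₂] [InnerProductSpace 𝕜 H₂] [CompleteSpace H₂]
    {S : H₀ →ₗ.[𝕜] H₁} {T : H₁ →ₗ.[𝕜] H₂}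
    (hSdense : Dense (S.domain : Set H₀)) (hTdense : Dense (T.domain : Set H₁))
    (hTclosed : T.IsClosed) (hST : pRange S ≤ pKer T)
    (hSrange : IsClosed (pRange S : Set H₁)) (hTrange : IsClosed (pRange T : Set H₂)) :
    pKer T ⊓ pKer S.adjoint ⊔ pRange S ⊔ pRange T.adjoint = ⊤ := by
  have : CompleteSpace (pRange S) := hSrange.completeSpace_coe
  have : CompleteSpace (pKer T) := (isClosed_pKer hTclosed).completeSpace_coe
  rw [pKer_adjoint_eq_orthogonal_pRange hSdense,
    pRange_adjoint_eq_orthogonal_pKer hTdense hTclosed hTrange, sup_comm (pKer T ⊓ _), inf_comm,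
    Submodule.sup_orthogonal_inf_of_hasOrthogonalProjection hST,
    Submodule.sup_orthogonal_of_hasOrthogonalProjection]

theorem stmt6_general {H₀ H₁ H₂ : Type*}
    [NormedAddCommGroup H₀] [InnerProductSpace ℂ H₀] [CompleteSpace H₀]
    [NormedAddCommGroup H₁] [InnerProductSpace ℂ H₁] [CompleteSpace H₁]
    [NormedAddCommGroup H₂] [InnerProductSpace ℂ H₂] [CompleteSpace H₂]
    (S : H₀ →ₗ.[ℂ] H₁) (T : H₁ →ₗ.[ℂ] H₂)
    (hSdense : Dense (S.domain : Set H₀)) (hTdense : Dense (T.domain : Set H₁))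
    (hTclosed : IsClosed (T.graph : Set (H₁ × H₂)))
    (hST : pRange S ≤ pKer T)
    (hSrange : IsClosed ((pRange S : Submodule ℂ H₁) : Set H₁))
    (hTrange : IsClosed ((pRange T : Submodule ℂ H₂) : Set H₂)) :
    -- the three pieces are pairwise orthogonal:
    (∀ a ∈ pKer T ⊓ pKer S.adjoint, ∀ b ∈ pRange S, ⟪a, b⟫_ℂ = 0) ∧
    (∀ a ∈ pKer T ⊓ pKer S.adjoint, ∀ c ∈ pRange T.adjoint, ⟪a, c⟫_ℂ = 0) ∧
    (∀ b ∈ pRange S, ∀ c ∈ pRange T.adjoint, ⟪b, c⟫_ℂ = 0) ∧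
    -- and every element of `H₁` decomposes uniquely as a sum of such pieces:
    (∀ v : H₁, ∃ a ∈ pKer T ⊓ pKer S.adjoint, ∃ b ∈ pRange S, ∃ c ∈ pRange T.adjoint,
      v = a + b + c ∧
      ∀ a' ∈ pKer T ⊓ pKer S.adjoint, ∀ b' ∈ pRange S, ∀ c' ∈ pRange T.adjoint,
        v = a' + b' + c' → a' = a ∧ b' = b ∧ c' = c) := by
  have hTadj := pRange_adjoint_eq_orthogonal_pKer hTdense hTclosed hTrange
  have hHS : pKer T ⊓ pKer S.adjoint ⟂ pRange S := by
    rw [pKer_adjoint_eq_orthogonal_pRange hSdense]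
    exact (Submodule.isOrtho_orthogonal_left _).mono_left inf_le_right
  have hHT : pKer T ⊓ pKer S.adjoint ⟂ pRange T.adjoint :=
    hTadj ▸ (Submodule.isOrtho_orthogonal_right _).mono_left inf_le_left
  have hST' : pRange S ⟂ pRange T.adjoint :=
    hTadj ▸ (Submodule.isOrtho_orthogonal_right _).mono_left hST
  exact ⟨Submodule.isOrtho_iff_inner_eq.mp hHS, Submodule.isOrtho_iff_inner_eq.mp hHT,
    Submodule.isOrtho_iff_inner_eq.mp hST', exists_unique_add_add_of_isOrtho hHS hHT hST'
      (pKer_inf_pKer_adjoint_sup_pRange_sup_pRange_adjoint_eq_top hSdense hTdense hTclosed hST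
        hSrange hTrange)⟩

/-- Abstract Hodge–Kodaira decomposition: for a Hilbert complex
`H₀ --S--> H₁ --T--> H₂` of densely defined closed operators with closed ranges,
`H₁` is the orthogonal direct sum of the harmonic space `Ker T ∩ Ker S*`,
`Range S`, and `Range T*`. -/
theorem stmt6 {H₀ H₁ H₂ : Type*}
    [NormedAddCommGroup H₀] [InnerProductSpace ℂ H₀] [CompleteSpace H₀]
    [NormedAddCommGroup H₁] [InnerProductSpace ℂ H₁] [CompleteSpace H₁]
    [NormedAddCommGroup H₂] [InnerProductSpace ℂ H₂] [CompleteSpace H₂]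
    (S : H₀ →ₗ.[ℂ] H₁) (T : H₁ →ₗ.[ℂ] H₂)
    (hSdense : Dense (S.domain : Set H₀)) (hTdense : Dense (T.domain : Set H₁))
    (hSclosed : IsClosed (S.graph : Set (H₀ × H₁)))
    (hTclosed : IsClosed (T.graph : Set (H₁ × H₂)))
    (hST : pRange S ≤ pKer T)
    (hSrange : IsClosed ((pRange S : Submodule ℂ H₁) : Set H₁))
    (hTrange : IsClosed ((pRange T : Submodule ℂ H₂) : Set H₂)) :
    -- the three pieces are pairwise orthogonal:
    (∀ a ∈ pKer T ⊓ pKer S.adjoint, ∀ b ∈ pRange S, ⟪a, b⟫_ℂ = 0) ∧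
    (∀ a ∈ pKer T ⊓ pKer S.adjoint, ∀ c ∈ pRange T.adjoint, ⟪a, c⟫_ℂ = 0) ∧
    (∀ b ∈ pRange S, ∀ c ∈ pRange T.adjoint, ⟪b, c⟫_ℂ = 0) ∧
    -- and every element of `H₁` decomposes uniquely as a sum of such pieces:
    (∀ v : H₁, ∃ a ∈ pKer T ⊓ pKer S.adjoint, ∃ b ∈ pRange S, ∃ c ∈ pRange T.adjoint,
      v = a + b + c ∧
      ∀ a' ∈ pKer T ⊓ pKer S.adjoint, ∀ b' ∈ pRange S, ∀ c' ∈ pRange T.adjoint,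
        v = a' + b' + c' → a' = a ∧ b' = b ∧ c' = c) :=
  stmt6_general S T hSdense hTdense hTclosed hST hSrange hTrange
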